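/- arXiv:2510.23267 — 4 statements merged into one kernel-verified Lean document; each statement's English description precedes it below -/
import Mathlib

section
/- Let C be a category admitting countable coproducts and let G : C ⥤ C be an endofunctor admitting a left adjoint H : C ⥤ C. Then the forgetful functor U : Frob(C, G) ⥤ C admits a left adjoint L, and there is a natural isomorphism U ∘ L ≅ (V ↦ ∐_{n∈ℕ} Hⁿ(V)), where Hⁿ denotes the n-fold iterate of H. -/
/-!
STATEMENT 1: If `C` admits countable coproducts and `G : C ⥤ C` admits a left
adjoint `H`, then the forgetful functor `U : Frob (C, G) ⥤ C` (from coalgebras over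
`G` to `C`) admits a left adjoint `L`, and `U ∘ L` is naturally isomorphic to
`V ↦ ∐_{n ∈ ℕ} Hⁿ V`.
-/

open CategoryTheory CategoryTheory.Limits

universe v u

variable {C : Type u} [Category.{v} C]

/-- The `n`-fold iterate of an endofunctor. -/
def iterateFunctor (H : C ⥤ C) : ℕ → (C ⥤ C)
  | 0 => 𝟭 C
  | n + 1 => iterateFunctor H n ⋙ H

/-- The functor `V ↦ ∐_{n ∈ ℕ} Hⁿ V`. -/
noncomputable def sigmaIterate (H : C ⥤ C) [HasCountableCoproducts C] : C ⥤ C where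
  obj V := ∐ fun n : ℕ => (iterateFunctor H n).obj V
  map g := Limits.Sigma.map fun n => (iterateFunctor H n).map g
  map_id V := by
    ext n
    simp
  map_comp g₁ g₂ := by
    ext n
    simp

/-!
The adjunction `H ⊣ G` identifies `G`-coalgebras with `H`-algebras compatibly with the
forgetful functors (`algebraCoalgebraEquiv`), so it suffices to construct free `H`-algebras.
Being a left adjoint, `H` preserves coproducts, so `H (∐ₙ Hⁿ V) ≅ ∐ₙ Hⁿ⁺¹ V`, and shifting
the summands makes `∐ₙ Hⁿ V` an `H`-algebra. An algebra map out of it is determined by its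
restriction `g` to the summand `V`: on the summand `Hⁿ V` it must be `Hⁿ g` followed by `n`
applications of the structure map, and these maps always assemble to an algebra map.
-/

namespace CategoryTheory.Endofunctor.Algebra

variable {H : C ⥤ C}

def iterateLift (A : Algebra H) {V : C} (g : V ⟶ A.a) : ∀ n, (iterateFunctor H n).obj V ⟶ A.a
  | 0 => g
  | n + 1 => H.map (iterateLift A g n) ≫ A.str

lemma iterateLift_comp (A : Algebra H) {V V' : C} (h : V' ⟶ V) (g : V ⟶ A.a) (n : ℕ) :
    iterateLift A (h ≫ g) n = (iterateFunctor H n).map h ≫ iterateLift A g n := by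
  induction n with
  | zero => rfl
  | succ n ih =>
    change H.map _ ≫ A.str = H.map ((iterateFunctor H n).map h) ≫ H.map _ ≫ A.str
    rw [ih, H.map_comp, Category.assoc]

section Free

variable [HasCoproductsOfShape ℕ C] [PreservesColimitsOfShape (Discrete ℕ) H]

variable (H) in
noncomputable def freeStr (V : C) :
    H.obj (∐ fun n => (iterateFunctor H n).obj V) ⟶ ∐ fun n => (iterateFunctor H n).obj V :=
  Cofan.IsColimit.desc (isColimitOfHasCoproductOfPreservesColimit H _) fun n =>
    Sigma.ι (fun m => (iterateFunctor H m).obj V) (n + 1)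

lemma map_ι_freeStr_assoc (V : C) (n : ℕ) {X : C}
    (g : (∐ fun m => (iterateFunctor H m).obj V) ⟶ X) :
    H.map (Sigma.ι (fun m => (iterateFunctor H m).obj V) n) ≫ freeStr H V ≫ g =
      Sigma.ι (fun m => (iterateFunctor H m).obj V) (n + 1) ≫ g :=
  Cofan.IsColimit.fac_assoc (isColimitOfHasCoproductOfPreservesColimit H _) _ n g

lemma hom_ext_of_map_ι {V X : C} {a b : H.obj (∐ fun n => (iterateFunctor H n).obj V) ⟶ X}
    (w : ∀ n, H.map (Sigma.ι (fun m => (iterateFunctor H m).obj V) n) ≫ a =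
      H.map (Sigma.ι (fun m => (iterateFunctor H m).obj V) n) ≫ b) : a = b :=
  Cofan.IsColimit.hom_ext (isColimitOfHasCoproductOfPreservesColimit H _) a b w

variable (H) in
noncomputable abbrev free (V : C) : Algebra H where
  a := ∐ fun n => (iterateFunctor H n).obj V
  str := freeStr H V

variable (H) in
noncomputable def freeUnit (V : C) : V ⟶ (free H V).a :=
  Sigma.ι (fun n => (iterateFunctor H n).obj V) 0

variable {V : C} {A : Algebra H}

lemma ι_comp_eq_iterateLift (f : free H V ⟶ A) (n : ℕ) :
    Sigma.ι (fun m => (iterateFunctor H m).obj V) n ≫ f.f =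
      iterateLift A (freeUnit H V ≫ f.f) n := by
  induction n with
  | zero => rfl
  | succ n ih =>
    have h : H.map (Sigma.ι (fun m => (iterateFunctor H m).obj V) n) ≫ freeStr H V ≫ f.f =
        H.map (iterateLift A (freeUnit H V ≫ f.f) n) ≫ A.str := by
      rw [← ih, H.map_comp_assoc, f.h]
    exact (map_ι_freeStr_assoc V n f.f).symm.trans h

lemma free_hom_ext {f g : free H V ⟶ A} (w : freeUnit H V ≫ f.f = freeUnit H V ≫ g.f) :
    f = g := by
  ext : 1
  refine Sigma.hom_ext _ _ fun n => ?_
  rw [ι_comp_eq_iterateLift f, ι_comp_eq_iterateLift g, w]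

lemma iterateLift_freeUnit (n : ℕ) :
    iterateLift (free H V) (freeUnit H V) n = Sigma.ι (fun m => (iterateFunctor H m).obj V) n := by
  simpa using (ι_comp_eq_iterateLift (𝟙 (free H V)) n).symm

noncomputable def freeLift (g : V ⟶ A.a) : free H V ⟶ A where
  f := Limits.Sigma.desc (iterateLift A g)
  h := hom_ext_of_map_ι fun n => by
    rw [← H.map_comp_assoc, Limits.Sigma.ι_desc, map_ι_freeStr_assoc]
    exact (Limits.Sigma.ι_desc (iterateLift A g) (n + 1)).symm

@[simp]
lemma ι_freeLift (g : V ⟶ A.a) (n : ℕ) :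
    Sigma.ι (fun m => (iterateFunctor H m).obj V) n ≫ (freeLift g).f = iterateLift A g n :=
  Limits.Sigma.ι_desc _ n

noncomputable def freeHomEquiv (V : C) (A : Algebra H) : (free H V ⟶ A) ≃ (V ⟶ A.a) where
  toFun f := freeUnit H V ≫ f.f
  invFun := freeLift
  left_inv _ := free_hom_ext (ι_freeLift _ 0)
  right_inv g := ι_freeLift g 0

variable (H) in
noncomputable def freeFunctor : C ⥤ Algebra H :=
  Adjunction.leftAdjointOfEquiv (G := forget H) freeHomEquiv
    fun _ _ _ _ _ => (Category.assoc _ _ _).symm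

variable (H) in
noncomputable def freeAdjunction : freeFunctor H ⊣ forget H :=
  Adjunction.adjunctionOfEquivLeft _ _

lemma freeFunctor_map_f {V' : C} (h : V ⟶ V') :
    ((freeFunctor H).map h).f = Limits.Sigma.map fun n => (iterateFunctor H n).map h := by
  refine Sigma.hom_ext _ _ fun n => ?_
  change Sigma.ι _ n ≫ (freeLift (h ≫ freeUnit H V' ≫ 𝟙 _)).f = _
  rw [Category.comp_id, ι_freeLift, iterateLift_comp, iterateLift_freeUnit]
  exact (Limits.Sigma.ι_map (fun m => (iterateFunctor H m).map h) n).symm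

end Free

variable (H) in
noncomputable def freeFunctorCompForgetIso [HasCountableCoproducts C]
    [PreservesColimitsOfShape (Discrete ℕ) H] : freeFunctor H ⋙ forget H ≅ sigmaIterate H :=
  NatIso.ofComponents (fun _ => Iso.refl _) fun h =>
    (Category.comp_id _).trans ((freeFunctor_map_f h).trans (Category.id_comp _).symm)

end CategoryTheory.Endofunctor.Algebra

namespace CategoryTheory.Endofunctor.Coalgebra

variable {G H : C ⥤ C} [PreservesColimitsOfShape (Discrete ℕ) H]

noncomputable def freeFunctor [HasCoproductsOfShape ℕ C] (adj : H ⊣ G) : C ⥤ Coalgebra G :=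
  Algebra.freeFunctor H ⋙ (Adjunction.algebraCoalgebraEquiv adj).functor

noncomputable def freeAdjunction [HasCoproductsOfShape ℕ C] (adj : H ⊣ G) :
    freeFunctor adj ⊣ forget G :=
  (Algebra.freeAdjunction H).comp (Adjunction.algebraCoalgebraEquiv adj).toAdjunction

noncomputable def freeFunctorCompForgetIso [HasCountableCoproducts C] (adj : H ⊣ G) :
    freeFunctor adj ⋙ forget G ≅ sigmaIterate H :=
  Algebra.freeFunctorCompForgetIso H

end CategoryTheory.Endofunctor.Coalgebra

theorem coalgebra_forget_hasLeftAdjoint (G H : C ⥤ C) [HasCountableCoproducts C]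
    (adj : H ⊣ G) :
    ∃ L : C ⥤ Endofunctor.Coalgebra G,
      Nonempty (L ⊣ Endofunctor.Coalgebra.forget G) ∧
      Nonempty (L ⋙ Endofunctor.Coalgebra.forget G ≅ sigmaIterate H) := by
  have := adj.leftAdjoint_preservesColimits
  exact ⟨Endofunctor.Coalgebra.freeFunctor adj, ⟨Endofunctor.Coalgebra.freeAdjunction adj⟩,
    ⟨Endofunctor.Coalgebra.freeFunctorCompForgetIso adj⟩⟩
end

section
/- The Frobenius module P is a compact projective generator of the category Frob_R: the hom functor Hom_{Frob_R}(P, −) : Frob_R → Type preserves sifted colimits and reflects isomorphisms. -/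
/-!
STATEMENT 4: For a commutative ring `R` of prime characteristic `p`, the Frobenius
module `P = ⨁_{n ∈ ℕ} R` (with `κ_P (r · eₙ) = r ^ p · e_{n+1}`) is a compact
projective generator of `Frob_R`: the hom functor `Hom_{Frob_R}(P, −) : Frob_R → Type`
preserves sifted colimits and reflects isomorphisms.
-/

open CategoryTheory

set_option linter.unusedSectionVars false

universe u

variable (p : ℕ) (R : Type u) [CommRing R] [Fact p.Prime] [CharP R p]

/-- A Frobenius module over `R`: an `R`-module `M` together with an additive map
`κ : M → M` that is semilinear along the Frobenius, i.e. `κ (r • m) = r ^ p • κ m`. -/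
structure FrobModule where
  /-- the underlying type -/
  carrier : Type u
  [isAddCommGroup : AddCommGroup carrier]
  [isModule : Module R carrier]
  /-- the Frobenius-semilinear structure map -/
  κ : carrier →+ carrier
  κ_smul : ∀ (r : R) (m : carrier), κ (r • m) = r ^ p • κ m

attribute [instance] FrobModule.isAddCommGroup FrobModule.isModule

namespace FrobModule

variable {p R}

/-- Morphisms of Frobenius modules: `R`-linear maps commuting with the structure maps. -/
@[ext]
structure Hom (M N : FrobModule p R) where
  /-- the underlying `R`-linear map -/
  toLinearMap : M.carrier →ₗ[R] N.carrier
  comm : ∀ m, toLinearMap (M.κ m) = N.κ (toLinearMap m)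

instance : Category (FrobModule p R) where
  Hom M N := Hom M N
  id M := ⟨LinearMap.id, fun _ => rfl⟩
  comp f g := ⟨g.toLinearMap.comp f.toLinearMap, fun m => by
    simp only [LinearMap.comp_apply, f.comm, g.comm]⟩
  id_comp f := by apply Hom.ext; rfl
  comp_id f := by apply Hom.ext; rfl
  assoc f g h := by apply Hom.ext; rfl

end FrobModule

/-- The structure map of the Frobenius module `P`, determined by
`r · eₙ ↦ r ^ p · e_{n+1}`. -/
noncomputable def Pκ : (ℕ →₀ R) →+ (ℕ →₀ R) where
  toFun m := Finsupp.mapDomain Nat.succ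
    (Finsupp.mapRange (frobenius R p) (map_zero _) m)
  map_zero' := by simp
  map_add' a b := by
    show Finsupp.mapDomain Nat.succ _ = _
    rw [Finsupp.mapRange_add (fun x y => map_add _ x y), Finsupp.mapDomain_add]

/-- The Frobenius module `P` with underlying module `⨁_{n ∈ ℕ} R` and structure map
`κ_P (r · eₙ) = r ^ p · e_{n+1}`. -/
noncomputable def P : FrobModule p R where
  carrier := ℕ →₀ R
  κ := Pκ p R
  κ_smul r m := by
    have h1 : Finsupp.mapRange (frobenius R p) (map_zero _) (r • m)
        = r ^ p • Finsupp.mapRange (frobenius R p) (map_zero _) m := by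
      ext n
      simp [Finsupp.mapRange_apply, frobenius_def, mul_pow]
    show Finsupp.mapDomain Nat.succ _ = r ^ p • Finsupp.mapDomain Nat.succ _
    rw [h1, Finsupp.mapDomain_smul]

/-
`P` is free on `e₀`: as `κ_P eₙ = eₙ₊₁`, a morphism `P ⟶ M` is determined by the image `x` of
`e₀`, and `eₙ ↦ κⁿ x` defines one for every `x`. So `Hom(P, -)` is the forgetful functor to types,
which clearly reflects isomorphisms. It preserves sifted colimits because these commute with
finite products in types: any two elements of such a colimit are represented at a common index,
and the addition `G × G ⟶ G` induces an addition on `colim G × colim G ≅ colim (G × G)`. Checked at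
a common index, the axioms of a Frobenius module hold, and the result is the colimit in `Frob_R`.
-/

namespace CategoryTheory.IsSifted

open Limits MonoidalCategory

variable {J : Type u} [SmallCategory J] [IsSifted J]

noncomputable def colimitProdEquiv (X Y : J ⥤ Type u) :
    colimit (X ⊗ Y) ≃ colimit X × colimit Y :=
  Equiv.ofBijective _ ((isIso_iff_bijective _).1
    (inferInstance : IsIso (CartesianMonoidalCategory.prodComparison colim X Y)))

variable {X Y Z : J ⥤ Type u}

lemma colimitProdEquiv_ι (j : J) (a : X.obj j) (b : Y.obj j) :
    colimitProdEquiv X Y (colimit.ι (X ⊗ Y) j (a, b)) = (colimit.ι X j a, colimit.ι Y j b) :=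
  Prod.ext (colimit.ι_map_apply (SemiCartesianMonoidalCategory.fst X Y) j _)
    (colimit.ι_map_apply (SemiCartesianMonoidalCategory.snd X Y) j _)

lemma exists_ι_eq_pair (x : colimit X) (y : colimit Y) :
    ∃ j a b, colimit.ι X j a = x ∧ colimit.ι Y j b = y := by
  obtain ⟨j, ⟨a, b⟩, hab⟩ := Types.jointly_surjective' ((colimitProdEquiv X Y).symm (x, y))
  rw [(colimitProdEquiv X Y).eq_symm_apply, colimitProdEquiv_ι] at hab
  exact ⟨j, a, b, Prod.ext_iff.1 hab⟩

lemma exists_ι_eq_triple (x : colimit X) (y : colimit Y) (z : colimit Z) :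
    ∃ j a b c, colimit.ι X j a = x ∧ colimit.ι Y j b = y ∧ colimit.ι Z j c = z := by
  obtain ⟨j, ⟨a, b⟩, c, hab, rfl⟩ := exists_ι_eq_pair ((colimitProdEquiv X Y).symm (x, y)) z
  rw [(colimitProdEquiv X Y).eq_symm_apply, colimitProdEquiv_ι] at hab
  exact ⟨j, a, b, c, (Prod.ext_iff.1 hab).1, (Prod.ext_iff.1 hab).2, rfl⟩

noncomputable def colimitBinop (μ : X ⊗ X ⟶ X) (x y : colimit X) : colimit X :=
  colim.map μ ((colimitProdEquiv X X).symm (x, y))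

lemma colimitBinop_ι (μ : X ⊗ X ⟶ X) (j : J) (a b : X.obj j) :
    colimitBinop μ (colimit.ι X j a) (colimit.ι X j b) = colimit.ι X j (μ.app j (a, b)) := by
  rw [colimitBinop, ← colimitProdEquiv_ι, Equiv.symm_apply_apply]
  exact colimit.ι_map_apply μ j _

end CategoryTheory.IsSifted

lemma CategoryTheory.Limits.Types.ι_section_eq {J : Type u} [SmallCategory J] [IsPreconnected J]
    {X : J ⥤ Type u} (s : X.sections) (j k : J) :
    colimit.ι X j (s.1 j) = colimit.ι X k (s.1 k) :=
  constant_of_preserves_morphisms (fun j => colimit.ι X j (s.1 j))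
    (fun j k f => by rw [← s.2 f, colimit.w_apply]) j k

namespace FrobModule

open Limits MonoidalCategory

section

omit [Fact p.Prime] [CharP R p]

variable {p R}

def forget : FrobModule p R ⥤ Type u where
  obj M := M.carrier
  map f := ↾f.toLinearMap

instance : (forget : FrobModule p R ⥤ Type u).Faithful where
  map_injective h := Hom.ext (LinearMap.ext (congrFun (congrArg TypeCat.homEquiv h)))

instance : (forget : FrobModule p R ⥤ Type u).ReflectsIsomorphisms where
  reflects {M N} f hf := by
    let e := LinearEquiv.ofBijective f.toLinearMap ((isIso_iff_bijective (forget.map f)).1 hf)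
    refine ⟨⟨⟨e.symm.toLinearMap, fun y => e.injective ?_⟩, ?_, ?_⟩⟩
    · change e (e.symm (N.κ y)) = f.toLinearMap (M.κ (e.symm y))
      rw [f.comm, e.apply_symm_apply]
      exact congrArg N.κ (e.apply_symm_apply y).symm
    · exact Hom.ext (LinearMap.ext e.symm_apply_apply)
    · exact Hom.ext (LinearMap.ext e.apply_symm_apply)

def addNatTrans : forget ⊗ forget ⟶ (forget : FrobModule p R ⥤ Type u) where
  app M := ↾fun (x : M.carrier × M.carrier) => x.1 + x.2
  naturality _ _ f := by ext; exact (map_add f.toLinearMap _ _).symm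

def negNatTrans : forget ⟶ (forget : FrobModule p R ⥤ Type u) where
  app M := ↾fun (x : M.carrier) => -x
  naturality _ _ f := by ext; exact (map_neg f.toLinearMap _).symm

def smulNatTrans (r : R) : forget ⟶ (forget : FrobModule p R ⥤ Type u) where
  app M := ↾fun (x : M.carrier) => r • x
  naturality _ _ f := by ext; exact (map_smul f.toLinearMap _ _).symm

def κNatTrans : forget ⟶ (forget : FrobModule p R ⥤ Type u) where
  app M := ↾M.κ
  naturality _ _ f := by ext; exact (f.comm _).symm

section Colimit

open IsSifted

variable {J : Type u} [SmallCategory J] [IsSifted J] (F : J ⥤ FrobModule p R)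

noncomputable instance : Zero (colimit (F ⋙ forget)) :=
  ⟨colimit.ι (F ⋙ forget) (Classical.arbitrary J) (0 : (F.obj _).carrier)⟩

noncomputable instance : Add (colimit (F ⋙ forget)) :=
  ⟨colimitBinop (Functor.whiskerLeft F addNatTrans)⟩

noncomputable instance : Neg (colimit (F ⋙ forget)) :=
  ⟨colimMap (Functor.whiskerLeft F negNatTrans)⟩

noncomputable instance : SMul R (colimit (F ⋙ forget)) :=
  ⟨fun r => colimMap (Functor.whiskerLeft F (smulNatTrans r))⟩

variable {F}

lemma ι_zero (j : J) : colimit.ι (F ⋙ forget) j (0 : (F.obj j).carrier) = 0 :=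
  Types.ι_section_eq (X := F ⋙ forget)
    ⟨fun j => (0 : (F.obj j).carrier), fun f => map_zero (F.map f).toLinearMap⟩ j _

lemma ι_add (j : J) (a b : (F.obj j).carrier) :
    colimit.ι (F ⋙ forget) j a + colimit.ι (F ⋙ forget) j b = colimit.ι (F ⋙ forget) j (a + b) :=
  colimitBinop_ι (X := F ⋙ forget) (Functor.whiskerLeft F addNatTrans) j a b

lemma ι_neg (j : J) (a : (F.obj j).carrier) :
    -colimit.ι (F ⋙ forget) j a = colimit.ι (F ⋙ forget) j (-a) :=
  colimit.ι_map_apply (Functor.whiskerLeft F negNatTrans) j a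

lemma ι_smul (r : R) (j : J) (a : (F.obj j).carrier) :
    r • colimit.ι (F ⋙ forget) j a = colimit.ι (F ⋙ forget) j (r • a) :=
  colimit.ι_map_apply (Functor.whiskerLeft F (smulNatTrans r)) j a

variable (F)

noncomputable instance : AddCommGroup (colimit (F ⋙ forget)) where
  add := (· + ·)
  zero := 0
  neg := Neg.neg
  add_assoc x y z := by
    obtain ⟨j, (a : (F.obj j).carrier), (b : (F.obj j).carrier), (c : (F.obj j).carrier),
      rfl, rfl, rfl⟩ := exists_ι_eq_triple x y z
    simp only [ι_add, add_assoc]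
  zero_add x := by
    obtain ⟨j, (a : (F.obj j).carrier), rfl⟩ := Types.jointly_surjective' x
    rw [← ι_zero j, ι_add, zero_add]
  add_zero x := by
    obtain ⟨j, (a : (F.obj j).carrier), rfl⟩ := Types.jointly_surjective' x
    rw [← ι_zero j, ι_add, add_zero]
  neg_add_cancel x := by
    obtain ⟨j, (a : (F.obj j).carrier), rfl⟩ := Types.jointly_surjective' x
    rw [ι_neg, ι_add, neg_add_cancel, ι_zero]
  add_comm x y := by
    obtain ⟨j, (a : (F.obj j).carrier), (b : (F.obj j).carrier), rfl, rfl⟩ :=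
      exists_ι_eq_pair x y
    rw [ι_add, ι_add, add_comm]
  nsmul := nsmulRec
  zsmul := zsmulRec

noncomputable instance : Module R (colimit (F ⋙ forget)) where
  smul := (· • ·)
  one_smul x := by
    obtain ⟨j, (a : (F.obj j).carrier), rfl⟩ := Types.jointly_surjective' x
    rw [ι_smul, one_smul]
  mul_smul r s x := by
    obtain ⟨j, (a : (F.obj j).carrier), rfl⟩ := Types.jointly_surjective' x
    rw [ι_smul, ι_smul, ι_smul, mul_smul]
  smul_zero r := by
    rw [← ι_zero (Classical.arbitrary J), ι_smul, smul_zero]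
  smul_add r x y := by
    obtain ⟨j, (a : (F.obj j).carrier), (b : (F.obj j).carrier), rfl, rfl⟩ :=
      exists_ι_eq_pair x y
    simp only [ι_add, ι_smul, smul_add]
  add_smul r s x := by
    obtain ⟨j, (a : (F.obj j).carrier), rfl⟩ := Types.jointly_surjective' x
    simp only [ι_add, ι_smul, add_smul]
  zero_smul x := by
    obtain ⟨j, (a : (F.obj j).carrier), rfl⟩ := Types.jointly_surjective' x
    rw [ι_smul, zero_smul, ι_zero]

noncomputable def colimitκ : colimit (F ⋙ forget) →+ colimit (F ⋙ forget) :=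
  AddMonoidHom.mk' (colimMap (Functor.whiskerLeft F κNatTrans)) fun x y => by
    obtain ⟨j, (a : (F.obj j).carrier), (b : (F.obj j).carrier), rfl, rfl⟩ :=
      exists_ι_eq_pair x y
    have ι_κ (c : (F.obj j).carrier) : colimMap (Functor.whiskerLeft F κNatTrans)
        (colimit.ι (F ⋙ forget) j c) = colimit.ι (F ⋙ forget) j ((F.obj j).κ c) :=
      colimit.ι_map_apply (Functor.whiskerLeft F κNatTrans) j c
    rw [ι_add, ι_κ, ι_κ, ι_κ, map_add, ι_add]

variable {F} in
lemma ι_κ (j : J) (a : (F.obj j).carrier) :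
    colimitκ F (colimit.ι (F ⋙ forget) j a) = colimit.ι (F ⋙ forget) j ((F.obj j).κ a) :=
  colimit.ι_map_apply (Functor.whiskerLeft F κNatTrans) j a

noncomputable abbrev colimitFrobModule : FrobModule p R where
  carrier := colimit (F ⋙ forget)
  κ := colimitκ F
  κ_smul r x := by
    obtain ⟨j, (a : (F.obj j).carrier), rfl⟩ := Types.jointly_surjective' x
    rw [ι_smul, ι_κ, ι_κ, (F.obj j).κ_smul, ι_smul]

noncomputable def colimitCocone : Cocone F where
  pt := colimitFrobModule F
  ι.app j :=
    { toLinearMap :=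
        { toFun := colimit.ι (F ⋙ forget) j
          map_add' a b := (ι_add j a b).symm
          map_smul' r a := (ι_smul r j a).symm }
      comm a := (ι_κ j a).symm }
  ι.naturality _ _ f := Hom.ext (LinearMap.ext (colimit.w_apply (F ⋙ forget) f))

variable {F} in
lemma desc_ι (s : Cocone F) (j : J) (a : (F.obj j).carrier) :
    colimit.desc (F ⋙ forget) (forget.mapCocone s) (colimit.ι (F ⋙ forget) j a) =
      (s.ι.app j).toLinearMap a :=
  colimit.ι_desc_apply (forget.mapCocone s) j a

noncomputable def colimitCoconeDesc (s : Cocone F) : colimitFrobModule F ⟶ s.pt where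
  toLinearMap :=
    { toFun := colimit.desc (F ⋙ forget) (forget.mapCocone s)
      map_add' x y := by
        obtain ⟨j, (a : (F.obj j).carrier), (b : (F.obj j).carrier), rfl, rfl⟩ :=
          exists_ι_eq_pair x y
        rw [ι_add, desc_ι, desc_ι, desc_ι, map_add]
      map_smul' r x := by
        obtain ⟨j, (a : (F.obj j).carrier), rfl⟩ := Types.jointly_surjective' x
        rw [ι_smul, desc_ι, desc_ι, map_smul, RingHom.id_apply] }
  comm x := by
    obtain ⟨j, (a : (F.obj j).carrier), rfl⟩ := Types.jointly_surjective' x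
    change colimit.desc (F ⋙ forget) (forget.mapCocone s) _ =
      s.pt.κ (colimit.desc (F ⋙ forget) (forget.mapCocone s) _)
    rw [ι_κ, desc_ι, desc_ι]
    exact (s.ι.app j).comm a

noncomputable def isColimitColimitCocone : IsColimit (colimitCocone F) :=
  IsColimit.ofFaithful forget (colimit.isColimit (F ⋙ forget)) (colimitCoconeDesc F) fun _ => rfl

instance : PreservesColimitsOfShape J (forget : FrobModule p R ⥤ Type u) where
  preservesColimit {F} :=
    preservesColimit_of_preserves_colimit_cocone (isColimitColimitCocone F)
      (colimit.isColimit (F ⋙ forget))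

end Colimit

end

variable {p R}

lemma Pκ_single (n : ℕ) (r : R) :
    Pκ p R (Finsupp.single n r) = Finsupp.single (n + 1) (r ^ p) := by
  simp only [Pκ, AddMonoidHom.coe_mk, ZeroHom.coe_mk, Finsupp.mapRange_single,
    Finsupp.mapDomain_single, frobenius_def]

lemma iterate_Pκ_single_zero (n : ℕ) :
    (Pκ p R)^[n] (Finsupp.single 0 1) = Finsupp.single n 1 := by
  induction n with
  | zero => rfl
  | succ n ih => rw [Function.iterate_succ_apply', ih, Pκ_single, one_pow]

noncomputable def lift {M : FrobModule p R} (x : M.carrier) : P p R ⟶ M where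
  toLinearMap := Finsupp.linearCombination R fun n => M.κ^[n] x
  comm m := by
    suffices h : (Finsupp.linearCombination R fun n => M.κ^[n] x).toAddMonoidHom.comp (Pκ p R) =
        M.κ.comp (Finsupp.linearCombination R fun n => M.κ^[n] x).toAddMonoidHom from
      DFunLike.congr_fun h m
    refine Finsupp.addHom_ext fun n r => ?_
    simp only [AddMonoidHom.coe_comp, LinearMap.toAddMonoidHom_coe, Function.comp_apply,
      Pκ_single, Finsupp.linearCombination_single, Function.iterate_succ_apply', M.κ_smul]

lemma lift_single {M : FrobModule p R} (x : M.carrier) (n : ℕ) (r : R) :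
    (lift x).toLinearMap (Finsupp.single n r) = r • M.κ^[n] x :=
  Finsupp.linearCombination_single R r n

lemma lift_single_zero {M : FrobModule p R} (x : M.carrier) :
    (lift x).toLinearMap (Finsupp.single 0 1) = x :=
  (lift_single x 0 1).trans (one_smul R x)

lemma hom_apply_single {M : FrobModule p R} (f : P p R ⟶ M) (n : ℕ) (r : R) :
    f.toLinearMap (Finsupp.single n r) = r • M.κ^[n] (f.toLinearMap (Finsupp.single 0 1)) := by
  have h : (Finsupp.single n r : (P p R).carrier) = r • (P p R).κ^[n] (Finsupp.single 0 1) := by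
    rw [← Finsupp.smul_single_one, ← iterate_Pκ_single_zero]
    rfl
  rw [h, map_smul]
  exact congrArg _ (Function.Semiconj.iterate_right f.comm n _)

lemma eq_lift {M : FrobModule p R} (f : P p R ⟶ M) :
    f = lift (f.toLinearMap (Finsupp.single 0 1)) :=
  Hom.ext (Finsupp.lhom_ext fun n r => (hom_apply_single f n r).trans (lift_single _ n r).symm)

noncomputable def homEquiv (M : FrobModule p R) : (P p R ⟶ M) ≃ M.carrier where
  toFun f := f.toLinearMap (Finsupp.single 0 1)
  invFun := lift
  left_inv f := (eq_lift f).symm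
  right_inv := lift_single_zero

variable (p R) in
noncomputable def coyonedaPIsoForget : coyoneda.obj (Opposite.op (P p R)) ≅ forget :=
  NatIso.ofComponents (fun M => (homEquiv M).toIso) fun _ => rfl

end FrobModule

/-- `P` is a compact projective generator of `Frob_R`: its hom functor preserves
sifted colimits and reflects isomorphisms. -/
theorem P_compact_projective_generator :
    (∀ (J : Type u) [SmallCategory J] [CategoryTheory.IsSifted J],
      Limits.PreservesColimitsOfShape J (coyoneda.obj (Opposite.op (P p R)))) ∧
    (coyoneda.obj (Opposite.op (P p R))).ReflectsIsomorphisms :=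
  ⟨fun _ _ _ => Limits.preservesColimitsOfShape_of_natIso (FrobModule.coyonedaPIsoForget p R).symm,
    reflectsIsomorphisms_of_iso (FrobModule.coyonedaPIsoForget p R).symm⟩
end

section
/- There is an isomorphism of rings between the endomorphism ring End_{Frob_R}(P) of the Frobenius module P in the category Frob_R and the opposite ring R[F]ᵒᵖ of the twisted polynomial ring R[F]. -/
/-!
STATEMENT 5: For a commutative ring `R` of prime characteristic `p`, there is an
isomorphism of rings between the endomorphism ring `End_{Frob_R}(P)` of the Frobenius
module `P = ⨁_{n ∈ ℕ} R` (with `κ_P (r · eₙ) = r ^ p · e_{n+1}`) and the opposite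
ring `R[F]ᵒᵖ` of the twisted polynomial ring `R[F]`.
-/

open CategoryTheory

set_option linter.unusedSectionVars false

universe u

variable (p : ℕ) (R : Type u) [CommRing R] [Fact p.Prime] [CharP R p]

namespace FrobModule

variable {p R}

section HomGroup

variable {M N : FrobModule p R}

instance : Zero (M ⟶ N) :=
  ⟨⟨0, fun m => by simp⟩⟩

instance : Add (M ⟶ N) :=
  ⟨fun f g => ⟨f.toLinearMap + g.toLinearMap, fun m => by
    simp [f.comm, g.comm]⟩⟩

instance : Neg (M ⟶ N) :=
  ⟨fun f => ⟨-f.toLinearMap, fun m => by simp [f.comm]⟩⟩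

instance : Sub (M ⟶ N) :=
  ⟨fun f g => ⟨f.toLinearMap - g.toLinearMap, fun m => by
    simp [f.comm, g.comm]⟩⟩

instance : SMul ℕ (M ⟶ N) :=
  ⟨fun n f => ⟨n • f.toLinearMap, fun m => by simp [f.comm]⟩⟩

instance : SMul ℤ (M ⟶ N) :=
  ⟨fun n f => ⟨n • f.toLinearMap, fun m => by simp [f.comm]⟩⟩

/-- The abelian group structure on morphisms of Frobenius modules. -/
instance : AddCommGroup (M ⟶ N) :=
  Function.Injective.addCommGroup (fun f : M ⟶ N => f.toLinearMap)
    (fun _ _ h => Hom.ext h) rfl (fun _ _ => rfl) (fun _ => rfl) (fun _ _ => rfl)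
    (fun _ _ => rfl) (fun _ _ => rfl)

/-- Composition of morphisms of Frobenius modules is bilinear. -/
instance : Preadditive (FrobModule p R) where
  add_comp M N K f f' g := by
    apply Hom.ext
    show g.toLinearMap.comp (f.toLinearMap + f'.toLinearMap)
      = g.toLinearMap.comp f.toLinearMap + g.toLinearMap.comp f'.toLinearMap
    rw [LinearMap.comp_add]
  comp_add M N K f g g' := by
    apply Hom.ext
    show (g.toLinearMap + g'.toLinearMap).comp f.toLinearMap
      = g.toLinearMap.comp f.toLinearMap + g'.toLinearMap.comp f.toLinearMap
    rw [LinearMap.add_comp]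

end HomGroup

end FrobModule

/-- The underlying additive group of the twisted polynomial ring `R[F]`:
finitely supported functions `ℕ →₀ R` (formal sums `∑ aₙ Fⁿ`). -/
def TwistedPoly (p : ℕ) (R : Type u) [CommRing R] [Fact p.Prime] [CharP R p] : Type u :=
  ℕ →₀ R

namespace TwistedPoly

variable (p : ℕ) (R : Type u) [CommRing R] [Fact p.Prime] [CharP R p]

noncomputable instance : AddCommGroup (TwistedPoly p R) :=
  inferInstanceAs (AddCommGroup (ℕ →₀ R))

/-- The element `a Fⁿ` of `R[F]`. -/
noncomputable def single (n : ℕ) (a : R) : TwistedPoly p R := Finsupp.single n a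

/-- The twisted convolution product on `ℕ →₀ R`, determined by
`(a Fᵐ) · (b Fⁿ) = (a * b ^ (p ^ m)) F^(m + n)`. -/
noncomputable def mulAux (f g : ℕ →₀ R) : ℕ →₀ R :=
  f.sum fun m a => g.sum fun n b => Finsupp.single (m + n) (a * (frobenius R p)^[m] b)

theorem mulAux_zero_left (g : ℕ →₀ R) : mulAux p R 0 g = 0 := by
  simp [mulAux]

theorem mulAux_zero_right (f : ℕ →₀ R) : mulAux p R f 0 = 0 := by
  simp [mulAux]

theorem mulAux_add_left (f₁ f₂ g : ℕ →₀ R) :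
    mulAux p R (f₁ + f₂) g = mulAux p R f₁ g + mulAux p R f₂ g := by
  classical
  refine Finsupp.sum_add_index' (fun m => ?_) (fun m a₁ a₂ => ?_)
  · simp
  · rw [← Finsupp.sum_add]
    refine Finsupp.sum_congr fun n _ => ?_
    rw [add_mul, Finsupp.single_add]

theorem mulAux_add_right (f g₁ g₂ : ℕ →₀ R) :
    mulAux p R f (g₁ + g₂) = mulAux p R f g₁ + mulAux p R f g₂ := by
  classical
  unfold mulAux
  rw [← Finsupp.sum_add]
  refine Finsupp.sum_congr fun m _ => ?_
  refine Finsupp.sum_add_index' (fun n => ?_) (fun n b₁ b₂ => ?_)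
  · simp
  · rw [iterate_map_add, mul_add, Finsupp.single_add]

theorem mulAux_single_single (m n : ℕ) (a b : R) :
    mulAux p R (Finsupp.single m a) (Finsupp.single n b)
      = Finsupp.single (m + n) (a * (frobenius R p)^[m] b) := by
  classical
  unfold mulAux
  rw [Finsupp.sum_single_index (by simp), Finsupp.sum_single_index (by simp [iterate_map_zero])]

theorem mulAux_assoc (f g h : ℕ →₀ R) :
    mulAux p R (mulAux p R f g) h = mulAux p R f (mulAux p R g h) := by
  classical
  induction f using Finsupp.induction_linear with
  | zero => simp [mulAux_zero_left]
  | add f₁ f₂ ih₁ ih₂ => simp [mulAux_add_left, ih₁, ih₂]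
  | single m a =>
    induction g using Finsupp.induction_linear with
    | zero => simp [mulAux_zero_left, mulAux_zero_right]
    | add g₁ g₂ ih₁ ih₂ => simp [mulAux_add_left, mulAux_add_right, ih₁, ih₂]
    | single n b =>
      induction h using Finsupp.induction_linear with
      | zero => simp [mulAux_zero_right]
      | add h₁ h₂ ih₁ ih₂ => simp [mulAux_add_right, ih₁, ih₂]
      | single k c =>
        rw [mulAux_single_single, mulAux_single_single, mulAux_single_single,
          mulAux_single_single, add_assoc, mul_assoc, iterate_map_mul,
          ← Function.iterate_add_apply]

theorem mulAux_one_left (f : ℕ →₀ R) : mulAux p R (Finsupp.single 0 1) f = f := by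
  classical
  induction f using Finsupp.induction_linear with
  | zero => simp [mulAux_zero_right]
  | add f₁ f₂ ih₁ ih₂ => rw [mulAux_add_right, ih₁, ih₂]
  | single n b => rw [mulAux_single_single]; simp

theorem mulAux_one_right (f : ℕ →₀ R) : mulAux p R f (Finsupp.single 0 1) = f := by
  classical
  induction f using Finsupp.induction_linear with
  | zero => simp [mulAux_zero_left]
  | add f₁ f₂ ih₁ ih₂ => rw [mulAux_add_left, ih₁, ih₂]
  | single n b => rw [mulAux_single_single]; simp [iterate_map_one]

/-- The ring structure on the twisted polynomial ring `R[F]`: the underlying additive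
group is `ℕ →₀ R`, the unit is `F⁰ = 1`, and the multiplication is determined by
`(a Fᵐ) · (b Fⁿ) = (a * b ^ (p ^ m)) F^(m + n)`. -/
noncomputable instance : Ring (TwistedPoly p R) :=
  { (inferInstanceAs (AddCommGroup (TwistedPoly p R)) : AddCommGroup (TwistedPoly p R)) with
    mul := fun f g => mulAux p R f g
    one := (Finsupp.single 0 1 : ℕ →₀ R)
    left_distrib := fun f g h => mulAux_add_right p R f g h
    right_distrib := fun f g h => mulAux_add_left p R f g h
    zero_mul := fun f => mulAux_zero_left p R f
    mul_zero := fun f => mulAux_zero_right p R f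
    mul_assoc := fun f g h => mulAux_assoc p R f g h
    one_mul := fun f => mulAux_one_left p R f
    mul_one := fun f => mulAux_one_right p R f }

@[simp] theorem single_mul_single (m n : ℕ) (a b : R) :
    (single p R m a) * (single p R n b) = single p R (m + n) (a * b ^ p ^ m) := by
  show mulAux p R (Finsupp.single m a) (Finsupp.single n b)
    = (Finsupp.single (m + n) (a * b ^ p ^ m) : ℕ →₀ R)
  rw [mulAux_single_single, iterate_frobenius]

/-- The canonical ring homomorphism `R →+* R[F]`, `a ↦ a F⁰`. -/
noncomputable def C : R →+* TwistedPoly p R where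
  toFun a := single p R 0 a
  map_one' := rfl
  map_mul' a b := by
    rw [single_mul_single]
    simp
  map_zero' := by
    show (Finsupp.single 0 (0 : R) : ℕ →₀ R) = 0
    simp
  map_add' a b := by
    show (Finsupp.single 0 (a + b) : ℕ →₀ R) = Finsupp.single 0 a + Finsupp.single 0 b
    exact Finsupp.single_add 0 a b

end TwistedPoly

variable (p : ℕ) (R : Type u) [CommRing R] [Fact p.Prime] [CharP R p]

/-!
An endomorphism of `P` is determined by the image `a` of `e₀`, because `b eₙ = b κⁿ(e₀)`.
Reading `P` as `R[F]`, on which `κ_P` is left multiplication by `F`, right multiplication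
by any `a` is an endomorphism; so `f ↦ f(e₀)` is bijective, and it reverses products since
`(f ∘ g)(e₀) = g(e₀) · f(e₀)`.
-/

variable {p R} in
theorem FrobModule.Hom.map_iterate_κ {M N : FrobModule p R} (f : M ⟶ N) (n : ℕ)
    (m : M.carrier) : f.toLinearMap (M.κ^[n] m) = N.κ^[n] (f.toLinearMap m) := by
  induction n with
  | zero => rfl
  | succ n ih => rw [Function.iterate_succ_apply', Function.iterate_succ_apply', f.comm, ih]

namespace TwistedPoly

theorem single_zero_mulAux (r : R) (f : ℕ →₀ R) :
    mulAux p R (Finsupp.single 0 r) f = r • f := by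
  induction f using Finsupp.induction_linear with
  | zero => rw [mulAux_zero_right, smul_zero]
  | add f₁ f₂ ih₁ ih₂ => rw [mulAux_add_right, ih₁, ih₂, smul_add]
  | single n b =>
    rw [mulAux_single_single, zero_add, Function.iterate_zero_apply, Finsupp.smul_single,
      smul_eq_mul]

theorem mulAux_smul_left (r : R) (f g : ℕ →₀ R) :
    mulAux p R (r • f) g = r • mulAux p R f g := by
  rw [← single_zero_mulAux, mulAux_assoc, single_zero_mulAux]

end TwistedPoly

open TwistedPoly

theorem Pκ_single (n : ℕ) (b : R) :
    Pκ p R (Finsupp.single n b) = Finsupp.single (n + 1) (frobenius R p b) := by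
  show Finsupp.mapDomain Nat.succ (Finsupp.mapRange (frobenius R p) (map_zero _)
      (Finsupp.single n b)) = _
  rw [Finsupp.mapRange_single, Finsupp.mapDomain_single]

/-- `κ_P` is left multiplication by `F` in `R[F]`. -/
theorem Pκ_eq_mulAux (x : ℕ →₀ R) : Pκ p R x = mulAux p R (Finsupp.single 1 1) x := by
  induction x using Finsupp.induction_linear with
  | zero => rw [map_zero, mulAux_zero_right]
  | add x₁ x₂ ih₁ ih₂ => rw [map_add, ih₁, ih₂, mulAux_add_right]
  | single n b =>
    rw [Pκ_single, mulAux_single_single, Function.iterate_one, one_mul, add_comm 1 n]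

theorem Pκ_mulAux (x a : ℕ →₀ R) : Pκ p R (mulAux p R x a) = mulAux p R (Pκ p R x) a := by
  rw [Pκ_eq_mulAux, Pκ_eq_mulAux, mulAux_assoc]

theorem Pκ_iterate_single_zero_one (n : ℕ) :
    (Pκ p R)^[n] (Finsupp.single 0 1) = Finsupp.single n (1 : R) := by
  induction n with
  | zero => rfl
  | succ n ih => rw [Function.iterate_succ_apply', ih, Pκ_single, map_one]

namespace P

noncomputable def rightMul (a : ℕ →₀ R) : End (P p R) where
  toLinearMap :=
    { toFun := fun x => mulAux p R x a
      map_add' := fun x y => mulAux_add_left p R x y a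
      map_smul' := fun r x => mulAux_smul_left p R r x a }
  comm := fun x => (Pκ_mulAux p R x a).symm

theorem rightMul_apply_single_zero_one (a : ℕ →₀ R) :
    (rightMul p R a).toLinearMap (Finsupp.single 0 1) = a :=
  mulAux_one_left p R a

theorem end_apply_single (f : End (P p R)) (n : ℕ) (b : R) :
    f.toLinearMap (Finsupp.single n b)
      = b • (Pκ p R)^[n] (f.toLinearMap (Finsupp.single 0 1)) := by
  have hsingle : (Finsupp.single n b : (P p R).carrier)
      = b • (P p R).κ^[n] (Finsupp.single 0 1) := by
    show _ = b • (Pκ p R)^[n] _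
    rw [Pκ_iterate_single_zero_one, Finsupp.smul_single, smul_eq_mul, mul_one]
  rw [hsingle, map_smul]
  exact congrArg (b • ·) (FrobModule.Hom.map_iterate_κ f n _)

theorem end_ext {f g : End (P p R)}
    (h : f.toLinearMap (Finsupp.single 0 1) = g.toLinearMap (Finsupp.single 0 1)) :
    f = g :=
  FrobModule.Hom.ext <| Finsupp.lhom_ext fun n b =>
    (end_apply_single p R f n b).trans <|
      (congrArg (b • (Pκ p R)^[n] ·) h).trans (end_apply_single p R g n b).symm

theorem end_eq_rightMul (f : End (P p R)) :
    f = rightMul p R (f.toLinearMap (Finsupp.single 0 1)) :=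
  end_ext p R (rightMul_apply_single_zero_one p R _).symm

theorem end_apply (f : End (P p R)) (x : ℕ →₀ R) :
    f.toLinearMap x = mulAux p R x (f.toLinearMap (Finsupp.single 0 1)) :=
  congrArg (fun φ : End (P p R) => φ.toLinearMap x) (end_eq_rightMul p R f)

/-- Evaluation at `e₀`. -/
noncomputable def endRingEquiv : End (P p R) ≃+* (TwistedPoly p R)ᵐᵒᵖ where
  toFun f := MulOpposite.op (f.toLinearMap (Finsupp.single 0 1))
  invFun a := rightMul p R a.unop
  left_inv f := (end_eq_rightMul p R f).symm
  right_inv a := congrArg MulOpposite.op (rightMul_apply_single_zero_one p R a.unop)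
  map_mul' f g :=
    congrArg MulOpposite.op (end_apply p R f (g.toLinearMap (Finsupp.single 0 1)))
  map_add' _ _ := rfl

end P

/-- The endomorphism ring of the Frobenius module `P` in `Frob_R` is isomorphic, as a
ring, to the opposite ring of the twisted polynomial ring `R[F]`. -/
theorem end_P_iso_twistedPoly_op :
    Nonempty (CategoryTheory.End (P p R) ≃+* (TwistedPoly p R)ᵐᵒᵖ) :=
  ⟨P.endRingEquiv p R⟩
end

section
/- Let A be a Grothendieck abelian category and P an object of A such that the hom functor Hom_A(P, −) : A → Type preserves sifted colimits. Then P is a projective object of A: for every epimorphism e : E ⟶ X and every morphism f : P ⟶ X there exists a morphism g : P ⟶ E with g ≫ e = f. -/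
/-!
STATEMENT 8: Let `A` be a Grothendieck abelian category (abelian, with all small
colimits, exact filtered colimits (AB5), and a separator) and `P` an object such
that `Hom_A(P, −) : A → Type` preserves sifted colimits. Then `P` is a projective
object of `A`: every morphism `P ⟶ X` factors through every epimorphism `E ⟶ X`.
-/

open CategoryTheory CategoryTheory.Limits Opposite

universe v u

section SiftedAux

open CategoryTheory.Limits.WalkingReflexivePair CategoryTheory.Limits.WalkingReflexivePair.Hom

namespace SiftedAux

abbrev W := WalkingReflexivePair

private lemma zgh {C : Type*} [Category C] {x y : C} (f : x ⟶ y) : Zigzag x y :=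
  Relation.ReflTransGen.single (Zag.of_hom f)

private lemma zgi {C : Type*} [Category C] {x y : C} (f : y ⟶ x) : Zigzag x y :=
  Relation.ReflTransGen.single (Zag.of_inv f)

/-- The canonical map down to `zero`. -/
def dn : ∀ Y : W, Y ⟶ WalkingReflexivePair.zero
  | .zero => 𝟙 _
  | .one => left

/-- The canonical map up to `one`. -/
def up : ∀ Y : W, Y ⟶ WalkingReflexivePair.one
  | .zero => reflexion
  | .one => 𝟙 _

lemma step1 {b : W} (f f' : WalkingReflexivePair.one ⟶ WalkingReflexivePair.zero)
    (g : b ⟶ WalkingReflexivePair.zero) :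
    Zigzag (J := StructuredArrow (WalkingReflexivePair.one, b) (Functor.diag W))
      (StructuredArrow.mk (Y := WalkingReflexivePair.zero) (f, g))
      (StructuredArrow.mk (Y := WalkingReflexivePair.zero) (f', g)) := by
  let m : StructuredArrow (WalkingReflexivePair.one, b) (Functor.diag W) :=
    StructuredArrow.mk (Y := WalkingReflexivePair.one) (𝟙 _, g ≫ reflexion)
  have h1 : m ⟶ StructuredArrow.mk (Y := WalkingReflexivePair.zero) (f, g) :=
    StructuredArrow.homMk f (by cases b <;> (change WalkingReflexivePair.Hom _ _ at g; cases g) <;> (change WalkingReflexivePair.Hom _ _ at f; cases f) <;> rfl)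
  have h2 : m ⟶ StructuredArrow.mk (Y := WalkingReflexivePair.zero) (f', g) :=
    StructuredArrow.homMk f' (by cases b <;> (change WalkingReflexivePair.Hom _ _ at g; cases g) <;> (change WalkingReflexivePair.Hom _ _ at f'; cases f') <;> rfl)
  exact (zgi h1).trans (zgh h2)

lemma step2 {a : W} (g g' : WalkingReflexivePair.one ⟶ WalkingReflexivePair.zero)
    (f : a ⟶ WalkingReflexivePair.zero) :
    Zigzag (J := StructuredArrow (a, WalkingReflexivePair.one) (Functor.diag W))
      (StructuredArrow.mk (Y := WalkingReflexivePair.zero) (f, g))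
      (StructuredArrow.mk (Y := WalkingReflexivePair.zero) (f, g')) := by
  let m : StructuredArrow (a, WalkingReflexivePair.one) (Functor.diag W) :=
    StructuredArrow.mk (Y := WalkingReflexivePair.one) (f ≫ reflexion, 𝟙 _)
  have h1 : m ⟶ StructuredArrow.mk (Y := WalkingReflexivePair.zero) (f, g) :=
    StructuredArrow.homMk g (by cases a <;> (change WalkingReflexivePair.Hom _ _ at f; cases f) <;> (change WalkingReflexivePair.Hom _ _ at g; cases g) <;> rfl)
  have h2 : m ⟶ StructuredArrow.mk (Y := WalkingReflexivePair.zero) (f, g') :=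
    StructuredArrow.homMk g' (by cases a <;> (change WalkingReflexivePair.Hom _ _ at f; cases f) <;> (change WalkingReflexivePair.Hom _ _ at g'; cases g') <;> rfl)
  exact (zgi h1).trans (zgh h2)

lemma zeroConn {a b : W} (f f' : a ⟶ WalkingReflexivePair.zero)
    (g g' : b ⟶ WalkingReflexivePair.zero) :
    Zigzag (J := StructuredArrow (a, b) (Functor.diag W))
      (StructuredArrow.mk (Y := WalkingReflexivePair.zero) (f, g))
      (StructuredArrow.mk (Y := WalkingReflexivePair.zero) (f', g')) := by
  cases a
  · change WalkingReflexivePair.Hom _ _ at f f'; cases f; cases f'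
    cases b
    · change WalkingReflexivePair.Hom _ _ at g g'; cases g; cases g'; exact Relation.ReflTransGen.refl
    · exact step2 g g' _
  · cases b
    · change WalkingReflexivePair.Hom _ _ at g g'; cases g; cases g'; exact step1 f f' _
    · exact (step1 f f' g).trans (step2 g g' f')

lemma toZero {a b : W} (Y : W) (f : a ⟶ Y) (g : b ⟶ Y) :
    Zigzag (J := StructuredArrow (a, b) (Functor.diag W))
      (StructuredArrow.mk (Y := Y) (f, g))
      (StructuredArrow.mk (Y := WalkingReflexivePair.zero) (f ≫ dn Y, g ≫ dn Y)) :=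
  zgh (StructuredArrow.homMk (dn Y) rfl)

instance : IsSiftedOrEmpty W := by
  constructor
  rintro ⟨a, b⟩
  have : Nonempty (StructuredArrow (a, b) (Functor.diag W)) :=
    ⟨StructuredArrow.mk (Y := WalkingReflexivePair.one) (up a, up b)⟩
  apply zigzag_isConnected
  rintro ⟨⟨⟨⟩⟩, Y, f, g⟩ ⟨⟨⟨⟩⟩, Y', f', g'⟩
  exact ((toZero Y f g).trans (zeroConn _ _ _ _)).trans ((toZero Y' f' g').symm)

instance : IsSifted W := { nonempty := ⟨WalkingReflexivePair.zero⟩ }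

end SiftedAux

end SiftedAux

theorem projective_of_preservesSiftedColimits
    {A : Type u} [Category.{v} A] [Abelian A] [HasColimits A] [AB5 A] [HasSeparator A]
    (P : A)
    (h : ∀ (J : Type v) [SmallCategory J] [IsSifted J],
      PreservesColimitsOfShape J (coyoneda.obj (op P))) :
    Projective P := by
  haveI : IsSifted (AsSmall.{v} WalkingReflexivePair) :=
    IsSifted.isSifted_iff_asSmallIsSifted.mp inferInstance
  haveI := h (AsSmall.{v} WalkingReflexivePair)
  haveI : PreservesColimitsOfShape WalkingReflexivePair (coyoneda.obj (op P)) :=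
    preservesColimitsOfShape_of_equiv AsSmall.equiv.symm _
  refine ⟨fun {E X} f e he => ?_⟩
  haveI := normalEpiOfEpi e
  let a := pullback.fst e e
  let b := pullback.snd e e
  have k : IsKernelPair e a b := IsPullback.of_hasPullback e e
  haveI : IsReflexivePair a b :=
    ⟨pullback.lift (𝟙 E) (𝟙 E) rfl, pullback.lift_fst _ _ _, pullback.lift_snd _ _ _⟩
  let F := ofIsReflexivePair a b
  let G : ReflexiveCofork F := ReflexiveCofork.mk (X := X) e k.w
  have hG : IsColimit G := (ReflexiveCofork.isColimitEquiv F G) k.toCoequalizer'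
  have hG' := isColimitOfPreserves (coyoneda.obj (op P)) hG
  obtain ⟨j, y, hy⟩ := Types.jointly_surjective _ hG' f
  cases j with
  | zero => exact ⟨y, hy⟩
  | one => exact ⟨y ≫ a, by refine Eq.trans ?_ hy; exact Category.assoc _ _ _⟩
end
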